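/- arXiv:1802.02602 — 4 statements merged into one kernel-verified Lean document; each statement's English description precedes it below -/
import Mathlib

section
/- Let a < b be reals, ω a weight on [a,b], and k, k' ∈ K_ω conjugate kernels. Then for every f ∈ L¹([a,b];ℝ): (i) I_a^{k'}(I_a^k f)(x) = ∫_a^x f(y) ω(y) dy for a.e. x ∈ [a,b], so I_a^{k'}(I_a^k f) has the absolutely continuous representative Φ(x) = ∫_a^x f(y) ω(y) dy; and (ii) for a.e. x ∈ [a,b], Φ is differentiable at x and (1/ω(x)) Φ'(x) = f(x); that is, the left-sided k'-derivative of I_a^k f equals f a.e. on [a,b]. -/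
open MeasureTheory Set

noncomputable section

/-- weight function on `[a,b]`: measurable, positive, with `ω` and `ω⁻¹` essentially bounded. -/
def IsWeight (a b : ℝ) (ω : ℝ → ℝ) : Prop :=
  Measurable ω ∧ (∀ x ∈ Icc a b, 0 < ω x) ∧
  essSup (fun x => ENNReal.ofReal (ω x)) (volume.restrict (Icc a b)) < ⊤ ∧
  essSup (fun x => ENNReal.ofReal (ω x)⁻¹) (volume.restrict (Icc a b)) < ⊤

/-- `F_k(y) = ∫_y^b k(x,y) ω(x) dx`. -/
def Fker (b : ℝ) (ω : ℝ → ℝ) (k : ℝ → ℝ → ℝ) (y : ℝ) : ℝ :=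
  ∫ x in y..b, k x y * ω x

/-- `G_k(y) = ∫_a^y k(y,x) ω(x) dx`. -/
def Gker (a : ℝ) (ω : ℝ → ℝ) (k : ℝ → ℝ → ℝ) (y : ℝ) : ℝ :=
  ∫ x in a..y, k y x * ω x

/-- membership in the kernel class `K_ω`. -/
def MemK (a b : ℝ) (ω : ℝ → ℝ) (k : ℝ → ℝ → ℝ) : Prop :=
  Measurable (Function.uncurry k) ∧
  (∀ x y : ℝ, a ≤ y → y < x → x ≤ b → 0 < k x y) ∧
  essSup (fun y => ENNReal.ofReal (Fker b ω k y)) (volume.restrict (Ico a b)) < ⊤ ∧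
  essSup (fun y => ENNReal.ofReal (Gker a ω k y)) (volume.restrict (Ioc a b)) < ⊤

/-- `δ_{k₁,k₂}(x,y) = ∫_y^x k₁(x,z) k₂(z,y) ω(z) dz`. -/
def deltaK (ω : ℝ → ℝ) (k₁ k₂ : ℝ → ℝ → ℝ) (x y : ℝ) : ℝ :=
  ∫ z in y..x, k₁ x z * k₂ z y * ω z

/-- `k₁ R k₂` : `0 < δ_{k₁,k₂}(x,y) < ∞` on `Ω` (finiteness as interval integrability). -/
def relR (a b : ℝ) (ω : ℝ → ℝ) (k₁ k₂ : ℝ → ℝ → ℝ) : Prop :=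
  ∀ x y : ℝ, a ≤ y → y < x → x ≤ b →
    0 < deltaK ω k₁ k₂ x y ∧
    IntervalIntegrable (fun z => k₁ x z * k₂ z y * ω z) volume y x

/-- conjugate kernels. -/
def Conjugate (a b : ℝ) (ω : ℝ → ℝ) (k k' : ℝ → ℝ → ℝ) : Prop :=
  ∀ x y : ℝ, a ≤ y → y < x → x ≤ b →
    deltaK ω k k' x y = 1 ∧ deltaK ω k' k x y = 1

/-- left-sided `k`-integral. -/
def Ia (a : ℝ) (ω : ℝ → ℝ) (k : ℝ → ℝ → ℝ) (f : ℝ → ℝ) (x : ℝ) : ℝ :=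
  ∫ y in a..x, k x y * f y * ω y

/-- right-sided `k`-integral. -/
def Ib (b : ℝ) (ω : ℝ → ℝ) (k : ℝ → ℝ → ℝ) (f : ℝ → ℝ) (x : ℝ) : ℝ :=
  ∫ y in x..b, k y x * f y * ω y

/-! Fubini: `I_a^{k'}(I_a^k f)(x)` is the integral of `k'(x,y) k(y,z) f(z) ω(y) ω(z)` over
`a < z < y < x`; integrating out `y` first leaves `∫_a^x δ_{k',k}(x,z) f(z) ω(z) dz`, and
`δ_{k',k} = 1`. The exchange is legitimate because the kernel is positive, so the same computation
with `|f|` bounds the absolute double integral by `‖f ω‖₁`. Part (ii) is the Lebesgue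
differentiation theorem for `Φ`, divided by `ω > 0`. -/

open Function

theorem integral_integral_mul_eq_of_integral_eq_one {α β : Type*} [MeasurableSpace α]
    [MeasurableSpace β] {μ : Measure α} {ν : Measure β} [SFinite μ] [SFinite ν]
    {K : α → β → ℝ} (hK : AEStronglyMeasurable (uncurry K) (μ.prod ν))
    (hK_nonneg : ∀ᵐ z ∂ν, ∀ᵐ y ∂μ, 0 ≤ K y z) (hK_one : ∀ᵐ z ∂ν, ∫ y, K y z ∂μ = 1)
    {g : β → ℝ} (hg : Integrable g ν) :
    ∫ y, ∫ z, K y z * g z ∂ν ∂μ = ∫ z, g z ∂ν := by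
  have hg_snd : AEStronglyMeasurable (fun p : α × β => g p.2) (μ.prod ν) :=
    hg.aestronglyMeasurable.comp_quasiMeasurePreserving Measure.quasiMeasurePreserving_snd
  have hKg : Integrable (fun p : α × β => K p.1 p.2 * g p.2) (μ.prod ν) := by
    refine (integrable_prod_iff' (f := fun p : α × β => K p.1 p.2 * g p.2) (hK.mul hg_snd)).2
      ⟨?_, hg.norm.congr ?_⟩
    · filter_upwards [hK_one] with z hz
      exact (Integrable.of_integral_ne_zero (hz ▸ one_ne_zero)).mul_const _
    · filter_upwards [hK_nonneg, hK_one] with z hz₀ hz₁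
      calc ‖g z‖ = (∫ y, K y z ∂μ) * ‖g z‖ := by rw [hz₁, one_mul]
        _ = ∫ y, ‖K y z * g z‖ ∂μ := by
          rw [← integral_mul_const]
          refine integral_congr_ae ?_
          filter_upwards [hz₀] with y hy
          rw [norm_mul, Real.norm_of_nonneg hy]
  calc ∫ y, ∫ z, K y z * g z ∂ν ∂μ = ∫ z, ∫ y, K y z * g z ∂μ ∂ν := integral_integral_swap hKg
    _ = ∫ z, g z ∂ν := by
      refine integral_congr_ae ?_
      filter_upwards [hK_one] with z hz
      rw [integral_mul_const, hz, one_mul]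

def iteratedKernel (ω : ℝ → ℝ) (k k' : ℝ → ℝ → ℝ) (x y z : ℝ) : ℝ :=
  if z < y then k' x y * k y z * ω y else 0

section iteratedKernel

variable {ω : ℝ → ℝ} {k k' : ℝ → ℝ → ℝ}

theorem measurable_uncurry_iteratedKernel (hω : Measurable ω) (hk : Measurable (uncurry k))
    (hk' : Measurable (uncurry k')) (x : ℝ) : Measurable (uncurry (iteratedKernel ω k k' x)) :=
  Measurable.ite (measurableSet_lt measurable_snd measurable_fst)
    (((hk'.comp (measurable_const.prodMk measurable_fst)).mul hk).mul
      (hω.comp measurable_fst)) measurable_const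

theorem setIntegral_iteratedKernel_mul {a x y : ℝ} (hay : a ≤ y) (hyx : y ≤ x) (f : ℝ → ℝ) :
    ∫ z in Ioo a x, iteratedKernel ω k k' x y z * (f z * ω z) = k' x y * Ia a ω k f y * ω y := by
  have hK : (fun z => iteratedKernel ω k k' x y z * (f z * ω z)) =
      (Iio y).indicator fun z => k' x y * (k y z * f z * ω z) * ω y := by
    ext z
    by_cases hzy : z < y
    · simp only [iteratedKernel, if_pos hzy, indicator_of_mem (mem_Iio.2 hzy)]
      ring
    · simp [iteratedKernel, hzy]
  rw [hK, setIntegral_indicator measurableSet_Iio, Ioo_inter_Iio, min_eq_right hyx,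
    integral_mul_const, integral_const_mul, Ia, intervalIntegral.integral_of_le hay,
    integral_Ioc_eq_integral_Ioo]

theorem setIntegral_iteratedKernel_left {a x z : ℝ} (haz : a ≤ z) (hzx : z ≤ x) :
    ∫ y in Ioo a x, iteratedKernel ω k k' x y z = deltaK ω k' k x z := by
  have hK : (fun y => iteratedKernel ω k k' x y z) =
      (Ioi z).indicator fun y => k' x y * k y z * ω y := by
    ext y
    by_cases hzy : z < y <;> simp [iteratedKernel, hzy]
  rw [hK, setIntegral_indicator measurableSet_Ioi, Ioo_inter_Ioi, max_eq_right haz,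
    ← integral_Ioc_eq_integral_Ioo, ← intervalIntegral.integral_of_le hzx, deltaK]

theorem Ia_Ia_eq_intervalIntegral {a b x : ℝ} (hax : a ≤ x) (hxb : x ≤ b)
    (hω_meas : Measurable ω) (hω_pos : ∀ y ∈ Icc a b, 0 < ω y)
    (hk_meas : Measurable (uncurry k)) (hk'_meas : Measurable (uncurry k'))
    (hk_pos : ∀ x y : ℝ, a ≤ y → y < x → x ≤ b → 0 < k x y)
    (hk'_pos : ∀ x y : ℝ, a ≤ y → y < x → x ≤ b → 0 < k' x y)
    (hδ : ∀ x y : ℝ, a ≤ y → y < x → x ≤ b → deltaK ω k' k x y = 1)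
    {f : ℝ → ℝ} (hf : IntegrableOn (fun y => f y * ω y) (Icc a b)) :
    Ia a ω k' (Ia a ω k f) x = ∫ y in a..x, f y * ω y := by
  have hK_nonneg : ∀ y ∈ Ioo a x, ∀ z ∈ Ioo a x, 0 ≤ iteratedKernel ω k k' x y z := by
    intro y hy z hz
    by_cases hzy : z < y
    · have := hk'_pos x y hy.1.le hy.2 hxb
      have := hk_pos y z hz.1.le hzy (hy.2.le.trans hxb)
      have := hω_pos y ⟨hy.1.le, hy.2.le.trans hxb⟩
      simp only [iteratedKernel, if_pos hzy]
      positivity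
    · simp [iteratedKernel, hzy]
  have hK_one :
      ∀ᵐ z ∂volume.restrict (Ioo a x), ∫ y in Ioo a x, iteratedKernel ω k k' x y z = 1 := by
    filter_upwards [ae_restrict_mem measurableSet_Ioo] with z hz
    rw [setIntegral_iteratedKernel_left hz.1.le hz.2.le, hδ x z hz.1.le hz.2 hxb]
  calc Ia a ω k' (Ia a ω k f) x
      = ∫ y in Ioo a x, ∫ z in Ioo a x, iteratedKernel ω k k' x y z * (f z * ω z) := by
        rw [Ia, intervalIntegral.integral_of_le hax, integral_Ioc_eq_integral_Ioo]
        refine setIntegral_congr_fun measurableSet_Ioo fun y hy => ?_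
        rw [setIntegral_iteratedKernel_mul hy.1.le hy.2.le]
    _ = ∫ z in Ioo a x, f z * ω z := by
        refine integral_integral_mul_eq_of_integral_eq_one
          (measurable_uncurry_iteratedKernel hω_meas hk_meas hk'_meas x).aestronglyMeasurable ?_
          hK_one (hf.mono_set (Ioo_subset_Icc_self.trans (Icc_subset_Icc_right hxb)))
        filter_upwards [ae_restrict_mem measurableSet_Ioo] with z hz
        filter_upwards [ae_restrict_mem measurableSet_Ioo] with y hy
        exact hK_nonneg y hy z hz
    _ = ∫ y in a..x, f y * ω y := by
        rw [intervalIntegral.integral_of_le hax, integral_Ioc_eq_integral_Ioo]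

end iteratedKernel

theorem IsWeight.integrableOn_mul {a b : ℝ} {ω : ℝ → ℝ} (hω : IsWeight a b ω) {f : ℝ → ℝ}
    (hf : IntegrableOn f (Icc a b)) : IntegrableOn (fun y => f y * ω y) (Icc a b) := by
  obtain ⟨hω_meas, hω_pos, hω_bdd, -⟩ := hω
  set C := essSup (fun x => ENNReal.ofReal (ω x)) (volume.restrict (Icc a b))
  refine hf.mul_bdd (c := C.toReal) hω_meas.aestronglyMeasurable ?_
  filter_upwards [ae_le_essSup (f := fun x => ENNReal.ofReal (ω x)),
    ae_restrict_mem measurableSet_Icc] with y hy hyI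
  rw [Real.norm_of_nonneg (hω_pos y hyI).le]
  exact (ENNReal.ofReal_le_iff_le_toReal hω_bdd.ne).1 hy

/-- if `k` and `k'` are conjugate kernels, then for `f ∈ L¹([a,b])`:
(i) `I_a^{k'}(I_a^k f)(x) = ∫_a^x f(y) ω(y) dy` a.e., so `Φ(x) = ∫_a^x f(y) ω(y) dy` is an
absolutely continuous representative of `I_a^{k'}(I_a^k f)`; and (ii) for a.e. `x ∈ [a,b]`,
`Φ` is differentiable at `x` with `(1/ω(x)) Φ'(x) = f(x)`; i.e. `D_a^{k'}(I_a^k f) = f` a.e. -/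
theorem stmt9 (a b : ℝ) (hab : a < b) (ω : ℝ → ℝ) (hω : IsWeight a b ω)
    (k k' : ℝ → ℝ → ℝ) (hk : MemK a b ω k) (hk' : MemK a b ω k')
    (hconj : Conjugate a b ω k k')
    (f : ℝ → ℝ) (hf : IntegrableOn f (Icc a b)) :
    (∀ᵐ x ∂(volume.restrict (Icc a b)),
      Ia a ω k' (Ia a ω k f) x = ∫ y in a..x, f y * ω y) ∧
    (∀ᵐ x ∂(volume.restrict (Icc a b)),
      DifferentiableAt ℝ (fun t => ∫ y in a..t, f y * ω y) x ∧
      (ω x)⁻¹ * deriv (fun t => ∫ y in a..t, f y * ω y) x = f x) := by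
  have hfω := hω.integrableOn_mul hf
  rw [← Measure.restrict_congr_set Ioo_ae_eq_Icc]
  refine ⟨?_, ?_⟩
  · filter_upwards [ae_restrict_mem measurableSet_Ioo] with x hx
    exact Ia_Ia_eq_intervalIntegral hx.1.le hx.2.le hω.1 hω.2.1 hk.1 hk'.1 hk.2.1 hk'.2.1
      (fun x y hay hyx hxb => (hconj x y hay hyx hxb).2) hfω
  · have hΦ :=
      ((intervalIntegrable_iff_integrableOn_Icc_of_le hab.le).2 hfω).ae_hasDerivAt_integral
    filter_upwards [ae_restrict_of_ae hΦ, ae_restrict_mem measurableSet_Ioo] with x hΦx hx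
    have hx_uIcc : x ∈ uIcc a b := by rw [uIcc_of_le hab.le]; exact Ioo_subset_Icc_self hx
    have hΦ_deriv := hΦx hx_uIcc a left_mem_uIcc
    refine ⟨hΦ_deriv.differentiableAt, ?_⟩
    rw [hΦ_deriv.deriv, mul_comm (f x),
      inv_mul_cancel_left₀ (hω.2.1 x (Ioo_subset_Icc_self hx)).ne']
end
end

section
/- For every λ > 0, ∫_0^∞ e^{−λ t} F(t) dt = 1/ln(1+λ), where F(t) = (∫_0^∞ t^{s−1}/Γ(s) ds) · e^{−t} for t > 0. -/
open MeasureTheory Set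

noncomputable section

/-- the exponential integral function `E₁(x) = ∫_x^∞ e^{−t}/t dt`. -/
def E1 (x : ℝ) : ℝ := ∫ t in Ioi x, Real.exp (-t) / t

/-- `F(t) = (∫_0^∞ t^{s−1}/Γ(s) ds) e^{−t}`. -/
def Ffun (t : ℝ) : ℝ := (∫ s in Ioi (0:ℝ), t ^ (s - 1) / Real.Gamma s) * Real.exp (-t)

/-!
Multiplying `F` by `e^{−λt}` turns it into `∫_0^∞ t^{s−1} e^{−(1+λ)t} / Γ(s) ds`. The integrand is
nonnegative, so Fubini applies; the `t`-integral is a Gamma integral equal to `(1+λ)^{−s}`, and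
`∫_0^∞ (1+λ)^{−s} ds = 1 / ln(1+λ)`.
-/

open Real

lemma rpow_neg_eq_exp_neg_log_mul {r : ℝ} (hr : 0 < r) (s : ℝ) :
    r ^ (-s) = exp (-log r * s) := by
  rw [rpow_def_of_pos hr, neg_mul, mul_neg]

lemma integrableOn_rpow_neg_Ioi {r : ℝ} (hr : 1 < r) :
    IntegrableOn (fun s : ℝ => r ^ (-s)) (Ioi 0) := by
  simpa only [rpow_neg_eq_exp_neg_log_mul (zero_lt_one.trans hr)]
    using integrableOn_exp_mul_Ioi (neg_neg_of_pos (log_pos hr)) 0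

lemma integral_rpow_neg_Ioi {r : ℝ} (hr : 1 < r) :
    ∫ s in Ioi (0 : ℝ), r ^ (-s) = 1 / log r := by
  simp only [rpow_neg_eq_exp_neg_log_mul (zero_lt_one.trans hr),
    integral_exp_mul_Ioi (neg_neg_of_pos (log_pos hr)), mul_zero, exp_zero]
  rw [neg_div_neg_eq]

lemma integrableOn_rpow_mul_exp_neg_mul_Ioi {s r : ℝ} (hs : 0 < s) (hr : 0 < r) :
    IntegrableOn (fun t : ℝ => t ^ (s - 1) * exp (-(r * t))) (Ioi 0) := by
  simpa only [rpow_one, neg_mul]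
    using integrableOn_rpow_mul_exp_neg_mul_rpow (by linarith : -1 < s - 1) one_pos hr

lemma integral_rpow_div_Gamma_mul_exp_neg_mul_Ioi {s r : ℝ} (hs : 0 < s) (hr : 0 < r) :
    ∫ t in Ioi (0 : ℝ), t ^ (s - 1) / Gamma s * exp (-(r * t)) = r ^ (-s) := by
  simp only [div_mul_eq_mul_div, integral_div, integral_rpow_mul_exp_neg_mul_Ioi hs hr,
    one_div, inv_rpow hr.le, rpow_neg hr.le]
  field_simp [(Gamma_pos_of_pos hs).ne']

lemma continuousOn_Gamma_Ioi : ContinuousOn Gamma (Ioi 0) := fun s hs =>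
  (differentiableAt_Gamma fun m hm => by
    rw [hm, mem_Ioi] at hs
    linarith [m.cast_nonneg (α := ℝ)]).continuousAt.continuousWithinAt

lemma continuousOn_rpow_div_Gamma_mul_exp_neg_mul (r : ℝ) :
    ContinuousOn (fun p : ℝ × ℝ => p.2 ^ (p.1 - 1) / Gamma p.1 * exp (-(r * p.2)))
      (Ioi 0 ×ˢ Ioi 0) := by
  refine ContinuousOn.mul (ContinuousOn.div ?_ ?_ ?_) (by fun_prop)
  · exact fun p hp => (continuousAt_rpow (p.2, p.1 - 1) (Or.inl hp.2.ne')).comp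
      (f := fun p : ℝ × ℝ => (p.2, p.1 - 1)) (by fun_prop) |>.continuousWithinAt
  · exact continuousOn_Gamma_Ioi.comp continuousOn_fst fun p hp => hp.1
  · exact fun p hp => (Gamma_pos_of_pos hp.1).ne'

lemma integrable_rpow_div_Gamma_mul_exp_neg_mul_prod {r : ℝ} (hr : 1 < r) :
    Integrable (fun p : ℝ × ℝ => p.2 ^ (p.1 - 1) / Gamma p.1 * exp (-(r * p.2)))
      ((volume.restrict (Ioi 0)).prod (volume.restrict (Ioi 0))) := by
  have hr0 : 0 < r := zero_lt_one.trans hr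
  have hmeas : AEStronglyMeasurable
      (fun p : ℝ × ℝ => p.2 ^ (p.1 - 1) / Gamma p.1 * exp (-(r * p.2)))
      ((volume.restrict (Ioi 0)).prod (volume.restrict (Ioi 0))) := by
    rw [Measure.prod_restrict]
    exact (continuousOn_rpow_div_Gamma_mul_exp_neg_mul r).aestronglyMeasurable
      (measurableSet_Ioi.prod measurableSet_Ioi)
  refine (integrable_prod_iff hmeas).2 ⟨?_, ?_⟩
  · filter_upwards [ae_restrict_mem measurableSet_Ioi] with s hs
    simpa only [div_mul_eq_mul_div] using
      (integrableOn_rpow_mul_exp_neg_mul_Ioi hs hr0).div_const (Gamma s)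
  · refine (integrableOn_rpow_neg_Ioi hr).congr_fun_ae ?_
    filter_upwards [ae_restrict_mem measurableSet_Ioi] with s hs
    rw [← integral_rpow_div_Gamma_mul_exp_neg_mul_Ioi hs hr0]
    refine setIntegral_congr_fun measurableSet_Ioi fun t ht => ?_
    have hΓ := Gamma_pos_of_pos hs
    have ht0 : (0 : ℝ) < t := ht
    exact (norm_of_nonneg (by positivity)).symm

lemma exp_neg_mul_mul_Ffun (lam t : ℝ) :
    exp (-(lam * t)) * Ffun t =
      ∫ s in Ioi (0 : ℝ), t ^ (s - 1) / Gamma s * exp (-((1 + lam) * t)) := by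
  rw [integral_mul_const, Ffun, show -((1 + lam) * t) = -(lam * t) + -t by ring, exp_add]
  ring

/-- the Laplace transform of `F`: `∫_0^∞ e^{−λt} F(t) dt = 1/ln(1+λ)`
for every `λ > 0`. -/
theorem stmt14 (lam : ℝ) (hlam : 0 < lam) :
    (∫ t in Ioi (0:ℝ), Real.exp (-(lam * t)) * Ffun t) = 1 / Real.log (1 + lam) := by
  have hr : 1 < 1 + lam := lt_add_of_pos_right 1 hlam
  calc (∫ t in Ioi (0:ℝ), exp (-(lam * t)) * Ffun t)
      = ∫ t in Ioi (0:ℝ), ∫ s in Ioi (0 : ℝ), t ^ (s - 1) / Gamma s * exp (-((1 + lam) * t)) := by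
        simp only [exp_neg_mul_mul_Ffun]
    _ = ∫ s in Ioi (0:ℝ), ∫ t in Ioi (0 : ℝ), t ^ (s - 1) / Gamma s * exp (-((1 + lam) * t)) :=
        (integral_integral_swap (integrable_rpow_div_Gamma_mul_exp_neg_mul_prod hr)).symm
    _ = ∫ s in Ioi (0:ℝ), (1 + lam) ^ (-s) :=
        setIntegral_congr_fun measurableSet_Ioi fun s hs =>
          integral_rpow_div_Gamma_mul_exp_neg_mul_Ioi hs (zero_lt_one.trans hr)
    _ = 1 / log (1 + lam) := integral_rpow_neg_Ioi hr

end
end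

section
/- Let f ∈ L¹([0,1];ℝ). Then ‖S_0^α f − f‖_{L¹([0,1])} → 0 as α → 0⁺; that is, lim_{α→0⁺} ∫_0^1 |(1/α) ∫_0^x E₁((x−y)/α) f(y) dy − f(x)| dx = 0. -/
open MeasureTheory Set

noncomputable section

/-- left-sided fractional integral of type (I): `(H_0^α f)(x) = ∫_0^x F((x−y)/α) f(y) dy`. -/
def H0 (α : ℝ) (f : ℝ → ℝ) (x : ℝ) : ℝ := ∫ y in (0:ℝ)..x, Ffun ((x - y) / α) * f y

/-- right-sided fractional integral of type (I): `(H_1^α f)(x) = ∫_x^1 F((y−x)/α) f(y) dy`. -/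
def H1 (α : ℝ) (f : ℝ → ℝ) (x : ℝ) : ℝ := ∫ y in x..(1:ℝ), Ffun ((y - x) / α) * f y

/-- left-sided fractional integral of type (II):
`(S_0^α f)(x) = (1/α) ∫_0^x E₁((x−y)/α) f(y) dy`. -/
def S0 (α : ℝ) (f : ℝ → ℝ) (x : ℝ) : ℝ := (1 / α) * ∫ y in (0:ℝ)..x, E1 ((x - y) / α) * f y

/-- right-sided fractional integral of type (II):
`(S_1^α f)(x) = (1/α) ∫_x^1 E₁((y−x)/α) f(y) dy`. -/
def S1 (α : ℝ) (f : ℝ → ℝ) (x : ℝ) : ℝ := (1 / α) * ∫ y in x..(1:ℝ), E1 ((y - x) / α) * f y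

/-!
Substituting `y = x - α t` writes `S_0^α f (x)` as the average `∫_0^∞ E₁(t) f(x - α t) dt` of
translates of `f` (extended by zero to the left of `0`), and Tonelli gives `∫_0^∞ E₁ = 1`, so
`E₁(t/α)/α` is an approximate identity. Hence
`‖S_0^α f - f‖₁ ≤ ∫_0^∞ E₁(t) ‖f(· - α t) - f‖₁ dt`, which tends to `0` by dominated
convergence: translation is continuous in `L¹` and `‖f(· - s) - f‖₁ ≤ 2 ‖f‖₁`.
-/

open Filter Topology
open scoped ENNReal

lemma measurable_indicator_Ioi_fst {β : Type*} [MeasurableSpace β] [Zero β] {g : ℝ → β}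
    (hg : Measurable g) : Measurable fun p : ℝ × ℝ => (Ioi p.1).indicator g p.2 := by
  have h : (fun p : ℝ × ℝ => (Ioi p.1).indicator g p.2) =
      {p | p.1 < p.2}.indicator (g ∘ Prod.snd) := by
    ext p; simp [indicator]
  exact h ▸ (hg.comp measurable_snd).indicator (measurableSet_lt measurable_fst measurable_snd)

lemma lintegral_Ioi_lintegral_Ioi (a : ℝ) {g : ℝ → ℝ≥0∞} (hg : Measurable g) :
    ∫⁻ x in Ioi a, ∫⁻ t in Ioi x, g t = ∫⁻ t in Ioi a, ENNReal.ofReal (t - a) * g t := by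
  have hswap : ∫⁻ x in Ioi a, ∫⁻ t, (Ioi x).indicator g t =
      ∫⁻ t, ∫⁻ x in Ioi a, (Ioi x).indicator g t :=
    lintegral_lintegral_swap (measurable_indicator_Ioi_fst hg).aemeasurable
  have hinner : ∀ t, ∫⁻ x in Ioi a, (Ioi x).indicator g t =
      (Ioi a).indicator (fun t => ENNReal.ofReal (t - a) * g t) t := by
    intro t
    have hIio : ∀ x, (Ioi x).indicator g t = (Iio t).indicator (fun _ => g t) x := by
      intro x; simp [indicator]
    simp_rw [hIio]
    rw [lintegral_indicator_const measurableSet_Iio, Measure.restrict_apply measurableSet_Iio,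
      Iio_inter_Ioi, Real.volume_Ioo, mul_comm]
    rcases lt_or_ge a t with ht | ht
    · rw [indicator_of_mem (mem_Ioi.2 ht)]
    · rw [indicator_of_notMem (notMem_Ioi.2 ht), ENNReal.ofReal_of_nonpos (sub_nonpos.2 ht),
        zero_mul]
  calc ∫⁻ x in Ioi a, ∫⁻ t in Ioi x, g t = ∫⁻ x in Ioi a, ∫⁻ t, (Ioi x).indicator g t := by
        simp_rw [lintegral_indicator measurableSet_Ioi]
    _ = ∫⁻ t, (Ioi a).indicator (fun t => ENNReal.ofReal (t - a) * g t) t := by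
        rw [hswap]; simp_rw [hinner]
    _ = _ := lintegral_indicator measurableSet_Ioi _

lemma integrableOn_exp_neg_div_self_Ioi {x : ℝ} (hx : 0 < x) :
    IntegrableOn (fun t => Real.exp (-t) / t) (Ioi x) := by
  refine ((integrableOn_exp_neg_Ioi x).const_mul x⁻¹).mono'
    (by fun_prop : Measurable fun t : ℝ => Real.exp (-t) / t).aestronglyMeasurable ?_
  filter_upwards [ae_restrict_mem measurableSet_Ioi] with t ht
  have ht₀ : 0 < t := hx.trans ht
  rw [Real.norm_of_nonneg (by positivity), div_eq_inv_mul]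
  gcongr
  exact ht.le

lemma measurable_E1 : Measurable E1 := by
  have h := (measurable_indicator_Ioi_fst
    (by fun_prop : Measurable fun t : ℝ => Real.exp (-t) / t)).stronglyMeasurable
  have hE1 : E1 = fun x => ∫ t, (Ioi x).indicator (fun t => Real.exp (-t) / t) t :=
    funext fun x => (integral_indicator measurableSet_Ioi).symm
  exact hE1 ▸ (h.integral_prod_right' (ν := volume)).measurable

lemma E1_nonneg {x : ℝ} (hx : 0 < x) : 0 ≤ E1 x :=
  setIntegral_nonneg measurableSet_Ioi fun t ht => by have := hx.trans ht; positivity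

lemma lintegral_E1_Ioi_zero : ∫⁻ x in Ioi 0, ENNReal.ofReal (E1 x) = 1 := by
  have hE1 : ∀ x ∈ Ioi (0 : ℝ), ENNReal.ofReal (E1 x) =
      ∫⁻ t in Ioi x, ENNReal.ofReal (Real.exp (-t) / t) := fun x hx =>
    ofReal_integral_eq_lintegral_ofReal (integrableOn_exp_neg_div_self_Ioi hx)
      (ae_restrict_of_forall_mem measurableSet_Ioi fun t ht => by
        have := (mem_Ioi.1 hx).trans ht; positivity)
  rw [setLIntegral_congr_fun measurableSet_Ioi hE1,
    lintegral_Ioi_lintegral_Ioi 0 (by fun_prop)]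
  calc ∫⁻ t in Ioi 0, ENNReal.ofReal (t - 0) * ENNReal.ofReal (Real.exp (-t) / t)
      = ∫⁻ t in Ioi 0, ENNReal.ofReal (Real.exp (-t)) := by
        refine setLIntegral_congr_fun measurableSet_Ioi fun t ht => ?_
        rw [sub_zero, ← ENNReal.ofReal_mul (le_of_lt ht), mul_div_cancel₀ _ (ne_of_gt ht)]
    _ = ENNReal.ofReal (∫ t in Ioi 0, Real.exp (-t)) :=
        (ofReal_integral_eq_lintegral_ofReal (integrableOn_exp_neg_Ioi 0)
          (ae_of_all _ fun t => (Real.exp_pos _).le)).symm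
    _ = 1 := by rw [integral_exp_neg_Ioi_zero, ENNReal.ofReal_one]

lemma integrableOn_E1_Ioi_zero : IntegrableOn E1 (Ioi 0) := by
  refine ⟨measurable_E1.aestronglyMeasurable, ?_⟩
  rw [hasFiniteIntegral_iff_ofReal (ae_restrict_of_forall_mem measurableSet_Ioi
    fun _ => E1_nonneg), lintegral_E1_Ioi_zero]
  exact ENNReal.one_lt_top

lemma integral_E1_Ioi_zero : ∫ x in Ioi 0, E1 x = 1 := by
  rw [integral_eq_lintegral_of_nonneg_ae (ae_restrict_of_forall_mem measurableSet_Ioi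
    fun _ => E1_nonneg) measurable_E1.aestronglyMeasurable, lintegral_E1_Ioi_zero,
    ENNReal.toReal_one]

theorem MeasureTheory.Integrable.continuous_lintegral_enorm_comp_sub_sub {G E : Type*}
    [AddCommGroup G] [TopologicalSpace G] [IsTopologicalAddGroup G] [MeasurableSpace G]
    [BorelSpace G] {μ : Measure G} [IsLocallyFiniteMeasure μ] [μ.InnerRegularCompactLTTop]
    [μ.IsAddLeftInvariant] [NormedAddCommGroup E] {c : G → E} (hc : Integrable c μ) :
    Continuous fun s => ∫⁻ x, ‖c (x - s) - c x‖ₑ ∂μ := by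
  have hc₁ : MemLp c 1 μ := memLp_one_iff_integrable.2 hc
  have : Fact ((1 : ℝ≥0∞) ≠ ∞) := ⟨ENNReal.one_ne_top⟩
  have htranslate : ∀ s, ∫⁻ x, ‖c (x - s) - c x‖ₑ ∂μ =
      edist (DomAddAct.mk (-s) +ᵥ hc₁.toLp c) (hc₁.toLp c) := by
    intro s
    rw [DomAddAct.mk_vadd_toLp, Lp.edist_toLp_toLp, eLpNorm_one_eq_lintegral_enorm]
    simp_rw [sub_eq_neg_add]
    rfl
  simp_rw [htranslate]
  exact ((DomAddAct.continuous_mk.comp continuous_neg).vadd continuous_const).edist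
    continuous_const

lemma lintegral_enorm_comp_sub_sub_le {G E : Type*} [AddGroup G] [MeasurableSpace G]
    [MeasurableAdd G] {μ : Measure G} [μ.IsAddRightInvariant] [NormedAddCommGroup E] {c : G → E}
    (hc : AEStronglyMeasurable c μ) (s : G) :
    ∫⁻ x, ‖c (x - s) - c x‖ₑ ∂μ ≤ 2 * ∫⁻ x, ‖c x‖ₑ ∂μ :=
  calc ∫⁻ x, ‖c (x - s) - c x‖ₑ ∂μ ≤ ∫⁻ x, (‖c (x - s)‖ₑ + ‖c x‖ₑ) ∂μ :=
        lintegral_mono fun x => enorm_sub_le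
    _ = (∫⁻ x, ‖c (x - s)‖ₑ ∂μ) + ∫⁻ x, ‖c x‖ₑ ∂μ := lintegral_add_right' _ hc.enorm
    _ = 2 * ∫⁻ x, ‖c x‖ₑ ∂μ := by
        rw [lintegral_sub_right_eq_self (fun x => ‖c x‖ₑ) s, two_mul]

section ApproximateIdentity

variable {E : Type*} [NormedAddCommGroup E] [NormedSpace ℝ E] [CompleteSpace E]
  {μ : Measure ℝ} {k : ℝ → ℝ} {c : ℝ → E}

lemma enorm_integral_smul_comp_sub_sub_le (hk : Integrable k μ) (hk_nonneg : 0 ≤ᵐ[μ] k)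
    (hk_one : ∫ t, k t ∂μ = 1) (hc : StronglyMeasurable c) (α x : ℝ) :
    ‖(∫ t, k t • c (x - α * t) ∂μ) - c x‖ₑ ≤
      ∫⁻ t, ENNReal.ofReal (k t) * ‖c (x - α * t) - c x‖ₑ ∂μ := by
  have henorm : ∀ᵐ t ∂μ, ‖k t • (c (x - α * t) - c x)‖ₑ =
      ENNReal.ofReal (k t) * ‖c (x - α * t) - c x‖ₑ := by
    filter_upwards [hk_nonneg] with t ht
    rw [enorm_smul, Real.enorm_of_nonneg ht]
  -- Once the right side is finite the integrand is integrable, so the Bochner integral is genuine.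
  by_cases hfin : ∫⁻ t, ENNReal.ofReal (k t) * ‖c (x - α * t) - c x‖ₑ ∂μ = ∞
  · rw [hfin]; exact le_top
  have hdiff : Integrable (fun t => k t • (c (x - α * t) - c x)) μ := by
    refine ⟨hk.1.smul ((hc.comp_measurable (by fun_prop)).sub
      stronglyMeasurable_const).aestronglyMeasurable, ?_⟩
    rw [hasFiniteIntegral_iff_enorm, lintegral_congr_ae henorm]
    exact lt_top_iff_ne_top.2 hfin
  have hconst : Integrable (fun t => k t • c x) μ := hk.smul_const _
  have hmain : (∫ t, k t • c (x - α * t) ∂μ) - c x = ∫ t, k t • (c (x - α * t) - c x) ∂μ := by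
    have hsum : (fun t => k t • c (x - α * t)) =
        fun t => k t • (c (x - α * t) - c x) + k t • c x := by
      ext t; rw [← smul_add, sub_add_cancel]
    rw [hsum, integral_add hdiff hconst, integral_smul_const, hk_one, one_smul,
      add_sub_cancel_right]
  rw [hmain, ← lintegral_congr_ae henorm]
  exact enorm_integral_le_lintegral_enorm _

variable [SFinite μ]

lemma lintegral_enorm_integral_smul_comp_sub_sub_le (hk : Integrable k μ)
    (hk_nonneg : 0 ≤ᵐ[μ] k) (hk_one : ∫ t, k t ∂μ = 1) (hc : StronglyMeasurable c) (α : ℝ) :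
    ∫⁻ x, ‖(∫ t, k t • c (x - α * t) ∂μ) - c x‖ₑ ≤
      ∫⁻ t, ENNReal.ofReal (k t) * (∫⁻ x, ‖c (x - α * t) - c x‖ₑ) ∂μ := by
  have hmeas : Measurable fun p : ℝ × ℝ => ‖c (p.1 - α * p.2) - c p.1‖ₑ :=
    ((hc.comp_measurable (by fun_prop)).sub (hc.comp_measurable measurable_fst)).enorm
  calc ∫⁻ x, ‖(∫ t, k t • c (x - α * t) ∂μ) - c x‖ₑ
      ≤ ∫⁻ x, ∫⁻ t, ENNReal.ofReal (k t) * ‖c (x - α * t) - c x‖ₑ ∂μ :=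
        lintegral_mono fun x => enorm_integral_smul_comp_sub_sub_le hk hk_nonneg hk_one hc α x
    _ = ∫⁻ t, (∫⁻ x, ENNReal.ofReal (k t) * ‖c (x - α * t) - c x‖ₑ) ∂μ :=
        lintegral_lintegral_swap (hk.aemeasurable.ennreal_ofReal.comp_snd.mul hmeas.aemeasurable)
    _ = ∫⁻ t, ENNReal.ofReal (k t) * (∫⁻ x, ‖c (x - α * t) - c x‖ₑ) ∂μ :=
        lintegral_congr fun t =>
          lintegral_const_mul _ (hmeas.comp (measurable_id.prodMk measurable_const))

theorem tendsto_lintegral_enorm_integral_smul_comp_sub_sub (hk : Integrable k μ)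
    (hk_nonneg : 0 ≤ᵐ[μ] k) (hk_one : ∫ t, k t ∂μ = 1) (hc : Integrable c)
    (hc_meas : StronglyMeasurable c) :
    Tendsto (fun α => ∫⁻ x, ‖(∫ t, k t • c (x - α * t) ∂μ) - c x‖ₑ) (𝓝 0) (𝓝 0) := by
  set W : ℝ → ℝ≥0∞ := fun s => ∫⁻ x, ‖c (x - s) - c x‖ₑ
  have hW : Continuous W := hc.continuous_lintegral_enorm_comp_sub_sub
  have hk_lintegral : ∫⁻ t, ENNReal.ofReal (k t) ∂μ = 1 := by
    rw [← ofReal_integral_eq_lintegral_ofReal hk hk_nonneg, hk_one, ENNReal.ofReal_one]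
  have hdominated : Tendsto (fun α => ∫⁻ t, ENNReal.ofReal (k t) * W (α * t) ∂μ) (𝓝 0)
      (𝓝 (∫⁻ t, ENNReal.ofReal (k t) * W (0 * t) ∂μ)) := by
    refine tendsto_lintegral_filter_of_dominated_convergence'
      (fun t => ENNReal.ofReal (k t) * (2 * ∫⁻ x, ‖c x‖ₑ))
      (Eventually.of_forall fun α => hk.aemeasurable.ennreal_ofReal.mul
        (hW.measurable.comp (measurable_const_mul α)).aemeasurable)
      (Eventually.of_forall fun α => ae_of_all _ fun t =>
        by gcongr; exact lintegral_enorm_comp_sub_sub_le hc.1 _) ?_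
      (ae_of_all _ fun t => ?_)
    · rw [lintegral_mul_const' _ _ (ENNReal.mul_ne_top ENNReal.ofNat_ne_top hc.2.ne),
        hk_lintegral, one_mul]
      exact ENNReal.mul_ne_top ENNReal.ofNat_ne_top hc.2.ne
    · exact ((ENNReal.continuous_const_mul ENNReal.ofReal_ne_top).comp
        (hW.comp (continuous_mul_const t))).tendsto 0
  simp only [zero_mul, W, sub_zero, sub_self, enorm_zero, lintegral_zero, mul_zero] at hdominated
  exact tendsto_of_tendsto_of_tendsto_of_le_of_le tendsto_const_nhds hdominated
    (fun _ => zero_le)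
    (fun α => lintegral_enorm_integral_smul_comp_sub_sub_le hk hk_nonneg hk_one hc_meas α)

end ApproximateIdentity

theorem MeasureTheory.IntegrableOn.exists_stronglyMeasurable_integrable_ae_eq {α E : Type*}
    [MeasurableSpace α] [NormedAddCommGroup E] {μ : Measure α} {s : Set α} {f : α → E}
    (hf : IntegrableOn f s μ) (hs : MeasurableSet s) :
    ∃ g : α → E, StronglyMeasurable g ∧ Integrable g μ ∧ (∀ x ∉ s, g x = 0) ∧
      f =ᵐ[μ.restrict s] g :=
  ⟨s.indicator (hf.1.mk f), hf.1.stronglyMeasurable_mk.indicator hs,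
    (integrable_indicator_iff hs).2 (hf.congr hf.1.ae_eq_mk),
    fun _ hx => indicator_of_notMem hx _,
    hf.1.ae_eq_mk.trans (indicator_ae_eq_restrict hs).symm⟩

lemma S0_congr {f g : ℝ → ℝ} {x : ℝ} (hx : 0 ≤ x) (hfg : ∀ᵐ y, y ∈ Ioc 0 x → f y = g y)
    (α : ℝ) : S0 α f x = S0 α g x := by
  rw [S0, S0, intervalIntegral.integral_congr_ae]
  filter_upwards [hfg] with y hy hy'
  rw [uIoc_of_le hx] at hy'
  rw [hy hy']

lemma S0_eq_integral_Ioi {c : ℝ → ℝ} (hc : ∀ y < 0, c y = 0) {α x : ℝ} (hα : 0 < α)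
    (hx : 0 ≤ x) : S0 α c x = ∫ t in Ioi 0, E1 t * c (x - α * t) := by
  set h : ℝ → ℝ := fun t => E1 t * c (x - α * t)
  have hsubst : ∀ y, E1 ((x - y) / α) * c y = h (x / α - y / α) := by
    intro y
    simp only [h, sub_div, mul_sub, mul_div_cancel₀ _ hα.ne', sub_sub_cancel]
  simp_rw [S0, hsubst, one_div, ← smul_eq_mul (a := α⁻¹),
    intervalIntegral.inv_smul_integral_comp_sub_div, sub_self, zero_div, sub_zero,
    intervalIntegral.integral_of_le (div_nonneg hx hα.le)]
  refine (setIntegral_eq_of_subset_of_forall_sdiff_eq_zero measurableSet_Ioi Ioc_subset_Ioi_self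
    fun t ht => ?_).symm
  have hxt : x - α * t < 0 := by
    have := (div_lt_iff₀ hα).1 (not_le.1 fun h' => ht.2 ⟨ht.1, h'⟩)
    linarith
  simp only [h, hc _ hxt, mul_zero]

/-- for `f ∈ L¹([0,1])`, `‖S_0^α f − f‖_{L¹([0,1])} → 0` as `α → 0⁺`. -/
theorem stmt17 (f : ℝ → ℝ) (hf : IntegrableOn f (Icc (0:ℝ) 1)) :
    Filter.Tendsto (fun α : ℝ => ∫ x in (0:ℝ)..1, |S0 α f x - f x|)
      (nhdsWithin 0 (Ioi 0)) (nhds 0) := by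
  obtain ⟨c, hc_meas, hc_int, hc_zero, hfc⟩ :=
    hf.exists_stronglyMeasurable_integrable_ae_eq measurableSet_Icc
  have hfc' : ∀ᵐ y, y ∈ Icc (0 : ℝ) 1 → f y = c y := (ae_restrict_iff' measurableSet_Icc).1 hfc
  have hlim := tendsto_lintegral_enorm_integral_smul_comp_sub_sub integrableOn_E1_Ioi_zero
    (ae_restrict_of_forall_mem measurableSet_Ioi fun _ => E1_nonneg) integral_E1_Ioi_zero
    hc_int hc_meas
  simp only [smul_eq_mul] at hlim
  rw [tendsto_zero_iff_enorm_tendsto_zero]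
  refine tendsto_of_tendsto_of_tendsto_of_le_of_le' tendsto_const_nhds
    (hlim.mono_left nhdsWithin_le_nhds) (.of_forall fun _ => zero_le) ?_
  filter_upwards [self_mem_nhdsWithin] with α (hα : 0 < α)
  calc ‖∫ x in (0 : ℝ)..1, |S0 α f x - f x|‖ₑ ≤ ∫⁻ x in Ioc 0 1, ‖S0 α f x - f x‖ₑ := by
        rw [intervalIntegral.integral_of_le zero_le_one]
        simpa using enorm_integral_le_lintegral_enorm (fun x => |S0 α f x - f x|)
    _ = ∫⁻ x in Ioc 0 1, ‖(∫ t in Ioi 0, E1 t * c (x - α * t)) - c x‖ₑ := by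
        refine setLIntegral_congr_fun_ae measurableSet_Ioc ?_
        filter_upwards [hfc'] with x hx hx01
        have hfc_Ioc : ∀ᵐ y, y ∈ Ioc 0 x → f y = c y :=
          hfc'.mono fun y hy hy' => hy ⟨hy'.1.le, hy'.2.trans hx01.2⟩
        rw [S0_congr hx01.1.le hfc_Ioc,
          S0_eq_integral_Ioi (fun y hy => hc_zero y fun h => hy.not_ge h.1) hα hx01.1.le,
          hx (Ioc_subset_Icc_self hx01)]
    _ ≤ _ := setLIntegral_le_lintegral _ _

end
end

section
/- Let ω be a weight on [0,1] and let k, k' ∈ K_ω be conjugate kernels. Assume (A1): for every y ∈ C([0,1];ℝ), the function x ↦ ∫_0^x k(x,s) y(s) ω(s) ds is continuous on [0,1]; and (A2): f : [0,1] × ℝ → ℝ is continuous and there is a constant c_f > 0 with |f(t,x₁) − f(t,x₂)| ≤ c_f |x₁ − x₂| for all (t,x₁,x₂) ∈ [0,1] × ℝ × ℝ and c_f · sup_{t∈[0,1]} ∫_0^t k(t,s) ω(s) ds < 1. Then there exists one and only one u ∈ C([0,1];ℝ) such that u(t) = ∫_0^t k(t,s) f(s,u(s)) ω(s) ds for all t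 ∈ [0,1] (equivalently, u is the unique continuous solution of the boundary value problem (D_0^{k'} u)(t) = f(t,u(t)) a.e. on [0,1] with (I_0^{k'} u)(0) = 0). -/
open MeasureTheory Set

noncomputable section

open scoped ENNReal NNReal

/-!
Write `T u = I_0^k (f(·, u))`. Once `t ↦ k(t, ·) ω` is integrable on `(0, t)`, the Lipschitz
bound on `f` gives `|T u (t) - T v (t)| ≤ c_f ‖u - v‖_∞ ∫_0^t k(t,s) ω(s) ds ≤ c_f M ‖u - v‖_∞`,
so `T` is a contraction of `C([0,1])` and Banach's fixed point theorem applies. Integrability is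
where conjugacy enters: by Tonelli on the triangle `0 < s < t < 1`,
`∫_0^1 k'(1,t) ω(t) ∫_0^t k(t,s) ω(s) ds dt = ∫_0^1 ω(s) δ_{k',k}(1,s) ds = ∫_0^1 ω < ∞`,
and `k'(1,t) ω(t) > 0`, so the inner integral is finite for almost every `t`. At the remaining
`t` the interval integral defining `T u (t)` may be Lean's junk value `0`, and the bound is
instead obtained from the continuity of `T u - T v` (assumption (A1)).
-/

section FixedPoint

variable {X : Type*} [TopologicalSpace X] {K : Set X}

theorem exists_unique_continuousOn_fixedPoint (hK : IsCompact K) (Φ : (X → ℝ) → X → ℝ)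
    {q : ℝ≥0} (hq : q < 1)
    (hcont : ∀ y, ContinuousOn y K → ContinuousOn (Φ y) K)
    (hlip : ∀ y₁ y₂, ContinuousOn y₁ K → ContinuousOn y₂ K → ∀ C : ℝ,
      (∀ x ∈ K, |y₁ x - y₂ x| ≤ C) → ∀ x ∈ K, |Φ y₁ x - Φ y₂ x| ≤ q * C) :
    (∃ u, ContinuousOn u K ∧ ∀ x ∈ K, u x = Φ u x) ∧
    (∀ u v, ContinuousOn u K → (∀ x ∈ K, u x = Φ u x) →
      ContinuousOn v K → (∀ x ∈ K, v x = Φ v x) → EqOn u v K) := by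
  have : CompactSpace K := isCompact_iff_compactSpace.mp hK
  let ext : C(K, ℝ) → X → ℝ := fun w => Function.extend Subtype.val w 0
  have hext : ∀ (w : C(K, ℝ)) (x : K), ext w x = w x := fun w =>
    Subtype.val_injective.extend_apply _ _
  have hext_cont : ∀ w : C(K, ℝ), ContinuousOn (ext w) K := fun w =>
    continuousOn_iff_continuous_domRestrict.2 (by convert w.continuous; exact funext (hext w))
  let T : C(K, ℝ) → C(K, ℝ) := fun w =>
    ⟨K.domRestrict (Φ (ext w)), continuousOn_iff_continuous_domRestrict.1 (hcont _ (hext_cont w))⟩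
  have hT : ContractingWith q T := by
    refine ⟨hq, LipschitzWith.of_dist_le_mul fun w₁ w₂ =>
      (ContinuousMap.dist_le (by positivity)).2 fun x => ?_⟩
    refine hlip _ _ (hext_cont w₁) (hext_cont w₂) _ (fun x hx => ?_) x x.2
    rw [← Real.dist_eq, hext w₁ ⟨x, hx⟩, hext w₂ ⟨x, hx⟩]
    exact ContinuousMap.dist_apply_le_dist _
  have hlocal : ∀ y₁ y₂, ContinuousOn y₁ K → ContinuousOn y₂ K → EqOn y₁ y₂ K →
      EqOn (Φ y₁) (Φ y₂) K := fun y₁ y₂ h₁ h₂ heq x hx => by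
    have := hlip y₁ y₂ h₁ h₂ 0 (fun x hx => by simp [heq hx]) x hx
    rwa [mul_zero, abs_nonpos_iff, sub_eq_zero] at this
  have hrestrict_fixed : ∀ u (hu : ContinuousOn u K), (∀ x ∈ K, u x = Φ u x) →
      Function.IsFixedPt T ⟨K.domRestrict u, continuousOn_iff_continuous_domRestrict.1 hu⟩ :=
    fun u hu hfix => ContinuousMap.ext fun x =>
      (hlocal _ u (hext_cont _) hu (fun y hy => hext _ ⟨y, hy⟩) x.2).trans (hfix x x.2).symm
  refine ⟨⟨ext (ContractingWith.fixedPoint T hT), hext_cont _, fun x hx => ?_⟩,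
    fun u v hu hfu hv hfv x hx => ?_⟩
  · rw [hext _ ⟨x, hx⟩]
    exact (congrArg (· ⟨x, hx⟩) hT.fixedPoint_isFixedPt).symm
  · exact congrArg (· ⟨x, hx⟩) (hT.fixedPoint_unique' (hrestrict_fixed u hu hfu)
      (hrestrict_fixed v hv hfv))

end FixedPoint

lemma abs_intervalIntegral_mul_sub_le {g y₁ y₂ : ℝ → ℝ} {a t C : ℝ} (hat : a ≤ t)
    (hg : IntegrableOn g (Ioo a t)) (hg0 : ∀ s ∈ Ioo a t, 0 ≤ g s)
    (hy₁ : ContinuousOn y₁ (Icc a t)) (hy₂ : ContinuousOn y₂ (Icc a t))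
    (hC : ∀ s ∈ Icc a t, |y₁ s - y₂ s| ≤ C) :
    |(∫ s in a..t, g s * y₁ s) - ∫ s in a..t, g s * y₂ s| ≤ C * ∫ s in a..t, g s := by
  have hgi : IntervalIntegrable g volume a t :=
    (intervalIntegrable_iff_integrableOn_Ioo_of_le hat).2 hg
  rw [← uIcc_of_le hat] at hy₁ hy₂
  rw [← intervalIntegral.integral_sub (hgi.mul_continuousOn hy₁) (hgi.mul_continuousOn hy₂),
    ← intervalIntegral.integral_const_mul, ← Real.norm_eq_abs]
  refine intervalIntegral.norm_integral_le_of_norm_le hat ?_ (hgi.const_mul C)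
  filter_upwards [Measure.ae_ne volume t] with s hst hs
  have hgs := hg0 s ⟨hs.1, lt_of_le_of_ne hs.2 hst⟩
  rw [← mul_sub, Real.norm_eq_abs, abs_mul, abs_of_nonneg hgs, mul_comm C]
  exact mul_le_mul_of_nonneg_left (hC s (Ioc_subset_Icc_self hs)) hgs

lemma ContinuousOn.forall_le_of_ae_le {a b c : ℝ} {g : ℝ → ℝ} (hab : a ≠ b)
    (hg : ContinuousOn g (Icc a b)) (hle : ∀ᵐ t ∂volume.restrict (Icc a b), g t ≤ c) :
    ∀ t ∈ Icc a b, g t ≤ c := fun _ ht =>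
  sup_eq_right.1 <| Measure.eqOn_Icc_of_ae_eq volume hab (hle.mono fun _ => sup_eq_right.2)
    (hg.sup continuousOn_const) continuousOn_const ht

section Kernels

variable {a b : ℝ} {ω : ℝ → ℝ} {k k' : ℝ → ℝ → ℝ}

lemma IsWeight.integrableOn (hω : IsWeight a b ω) : IntegrableOn ω (Icc a b) := by
  obtain ⟨hm, hpos, hsup, -⟩ := hω
  refine Measure.integrableOn_of_bounded (by simp) hm.aestronglyMeasurable
    (M := (essSup (fun x => ENNReal.ofReal (ω x)) (volume.restrict (Icc a b))).toReal) ?_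
  filter_upwards [ae_le_essSup (f := fun x => ENNReal.ofReal (ω x)),
    ae_restrict_mem measurableSet_Icc] with x hx hxI
  rw [Real.norm_of_nonneg (hpos x hxI).le]
  exact (ENNReal.ofReal_le_iff_le_toReal hsup.ne).1 hx

lemma Conjugate.setLIntegral_Ioo_eq (hω : IsWeight a b ω) (hk : MemK a b ω k)
    (hk' : MemK a b ω k') (hconj : Conjugate a b ω k k') {s : ℝ} (hs : s ∈ Ioo a b) :
    ∫⁻ t in Ioo s b, ENNReal.ofReal (k' b t * ω t) * ENNReal.ofReal (k t s * ω s) =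
      ENNReal.ofReal (ω s) := by
  have hδ : deltaK ω k' k b s = 1 := (hconj b s hs.1.le hs.2 le_rfl).2
  rw [deltaK, intervalIntegral.integral_of_le hs.2.le, integral_Ioc_eq_integral_Ioo] at hδ
  -- a non-integrable integrand would have integral `0`, not `1`
  have hint : IntegrableOn (fun t => k' b t * k t s * ω t) (Ioo s b) := by
    by_contra h
    rw [integral_undef h] at hδ
    exact zero_ne_one hδ
  have hpos : ∀ t ∈ Ioo s b, 0 < k' b t ∧ 0 < k t s ∧ 0 < ω t ∧ 0 < ω s := fun t ht =>
    ⟨hk'.2.1 b t (hs.1.trans ht.1).le ht.2 le_rfl, hk.2.1 t s hs.1.le ht.1 ht.2.le,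
      hω.2.1 t ⟨(hs.1.trans ht.1).le, ht.2.le⟩, hω.2.1 s ⟨hs.1.le, hs.2.le⟩⟩
  calc ∫⁻ t in Ioo s b, ENNReal.ofReal (k' b t * ω t) * ENNReal.ofReal (k t s * ω s)
      = ∫⁻ t in Ioo s b, ENNReal.ofReal (ω s) * ENNReal.ofReal (k' b t * k t s * ω t) := by
        refine setLIntegral_congr_fun measurableSet_Ioo fun t ht => ?_
        obtain ⟨h1, h2, h3, h4⟩ := hpos t ht
        rw [← ENNReal.ofReal_mul (by positivity), ← ENNReal.ofReal_mul h4.le]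
        ring_nf
    _ = ENNReal.ofReal (ω s) * ENNReal.ofReal (∫ t in Ioo s b, k' b t * k t s * ω t) := by
        rw [lintegral_const_mul' _ _ ENNReal.ofReal_ne_top, ofReal_integral_eq_lintegral_ofReal hint
          (ae_restrict_of_forall_mem measurableSet_Ioo fun t ht => ?_)]
        obtain ⟨h1, h2, h3, -⟩ := hpos t ht
        positivity
    _ = ENNReal.ofReal (ω s) := by rw [hδ, ENNReal.ofReal_one, mul_one]

def triangleDensity (a b : ℝ) (ω : ℝ → ℝ) (k k' : ℝ → ℝ → ℝ) (t s : ℝ) : ℝ≥0∞ :=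
  if a < s ∧ s < t ∧ t < b then
    ENNReal.ofReal (k' b t * ω t) * ENNReal.ofReal (k t s * ω s)
  else 0

lemma measurable_triangleDensity (hωm : Measurable ω) (hkm : Measurable (Function.uncurry k))
    (hk'm : Measurable (Function.uncurry k')) :
    Measurable (Function.uncurry (triangleDensity a b ω k k')) := by
  refine Measurable.ite ?_ ?_ measurable_const
  · exact (measurableSet_lt measurable_const measurable_snd).inter
      ((measurableSet_lt measurable_snd measurable_fst).inter
        (measurableSet_lt measurable_fst measurable_const))
  · have hk'b : Measurable fun t => k' b t := hk'm.comp (measurable_const.prodMk measurable_id)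
    exact ((hk'b.comp measurable_fst).mul (hωm.comp measurable_fst)).ennreal_ofReal.mul
      (hkm.mul (hωm.comp measurable_snd)).ennreal_ofReal

lemma Conjugate.lintegral_triangleDensity_fst (hω : IsWeight a b ω) (hk : MemK a b ω k)
    (hk' : MemK a b ω k') (hconj : Conjugate a b ω k k') (s : ℝ) :
    ∫⁻ t, triangleDensity a b ω k k' t s =
      (Ioo a b).indicator (fun s => ENNReal.ofReal (ω s)) s := by
  by_cases hs : s ∈ Ioo a b
  · rw [indicator_of_mem hs, ← hconj.setLIntegral_Ioo_eq hω hk hk' hs,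
      ← lintegral_indicator measurableSet_Ioo]
    congr 1 with t
    simp [triangleDensity, indicator_apply, hs.1]
  · have hzero : ∀ t, triangleDensity a b ω k k' t s = 0 := fun t =>
      if_neg fun h => hs ⟨h.1, h.2.1.trans h.2.2⟩
    simp [hzero, hs]

lemma lintegral_triangleDensity_snd {t : ℝ} (ht : t < b) :
    ∫⁻ s, triangleDensity a b ω k k' t s =
      ENNReal.ofReal (k' b t * ω t) * ∫⁻ s in Ioo a t, ENNReal.ofReal (k t s * ω s) := by
  rw [← lintegral_const_mul' _ _ ENNReal.ofReal_ne_top, ← lintegral_indicator measurableSet_Ioo]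
  congr 1 with s
  simp [triangleDensity, indicator_apply, ht]

lemma Conjugate.ae_integrableOn (hω : IsWeight a b ω) (hk : MemK a b ω k)
    (hk' : MemK a b ω k') (hconj : Conjugate a b ω k k') :
    ∀ᵐ t ∂volume.restrict (Ioo a b), IntegrableOn (fun s => k t s * ω s) (Ioo a t) := by
  have hm := measurable_triangleDensity (a := a) (b := b) hω.1 hk.1 hk'.1
  have hfin : ∫⁻ t, ∫⁻ s, triangleDensity a b ω k k' t s < ⊤ := by
    simp_rw [lintegral_lintegral_swap hm.aemeasurable,
      hconj.lintegral_triangleDensity_fst hω hk hk', lintegral_indicator measurableSet_Ioo]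
    exact (hω.integrableOn.mono_set Ioo_subset_Icc_self).lintegral_lt_top
  filter_upwards [ae_restrict_of_ae (ae_lt_top' hm.lintegral_prod_right'.aemeasurable hfin.ne),
    ae_restrict_mem measurableSet_Ioo] with t hfin_t ht
  change ∫⁻ s, triangleDensity a b ω k k' t s < ⊤ at hfin_t
  rw [lintegral_triangleDensity_snd ht.2] at hfin_t
  have hk't : 0 < k' b t * ω t :=
    mul_pos (hk'.2.1 b t ht.1.le ht.2 le_rfl) (hω.2.1 t ⟨ht.1.le, ht.2.le⟩)
  have hkm : Measurable fun s => k t s := hk.1.comp (measurable_const.prodMk measurable_id)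
  refine ⟨(hkm.mul hω.1).aestronglyMeasurable,
    (hasFiniteIntegral_iff_ofReal (ae_restrict_of_forall_mem measurableSet_Ioo fun s hs => ?_)).2
      (ENNReal.lt_top_of_mul_ne_top_right hfin_t.ne (ENNReal.ofReal_pos.2 hk't).ne')⟩
  exact (mul_pos (hk.2.1 t s hs.1.le hs.2 ht.2.le) (hω.2.1 s ⟨hs.1.le, hs.2.le.trans ht.2.le⟩)).le

lemma abs_Ia_sub_le (hab : a < b) (hω : IsWeight a b ω) (hk : MemK a b ω k)
    (hk' : MemK a b ω k') (hconj : Conjugate a b ω k k')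
    (hcont : ∀ y, ContinuousOn y (Icc a b) → ContinuousOn (Ia a ω k y) (Icc a b))
    {M : ℝ} (hM : ∀ t ∈ Icc a b, (∫ s in a..t, k t s * ω s) ≤ M)
    {y₁ y₂ : ℝ → ℝ} (hy₁ : ContinuousOn y₁ (Icc a b)) (hy₂ : ContinuousOn y₂ (Icc a b))
    {C : ℝ} (hC : ∀ s ∈ Icc a b, |y₁ s - y₂ s| ≤ C) :
    ∀ t ∈ Icc a b, |Ia a ω k y₁ t - Ia a ω k y₂ t| ≤ C * M := by
  have hC0 : 0 ≤ C := (abs_nonneg _).trans (hC a (left_mem_Icc.2 hab.le))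
  refine ((hcont y₁ hy₁).sub (hcont y₂ hy₂)).abs.forall_le_of_ae_le hab.ne ?_
  rw [← Measure.restrict_congr_set Ioo_ae_eq_Icc]
  filter_upwards [Conjugate.ae_integrableOn hω hk hk' hconj, ae_restrict_mem measurableSet_Ioo]
    with t hint ht
  have hsub : Icc a t ⊆ Icc a b := Icc_subset_Icc_right ht.2.le
  simp only [Ia, mul_right_comm (k t _)]
  calc _ ≤ C * ∫ s in a..t, k t s * ω s :=
        abs_intervalIntegral_mul_sub_le ht.1.le hint
          (fun s hs => (mul_pos (hk.2.1 t s hs.1.le hs.2 ht.2.le)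
            (hω.2.1 s ⟨hs.1.le, hs.2.le.trans ht.2.le⟩)).le)
          (hy₁.mono hsub) (hy₂.mono hsub) fun s hs => hC s (hsub hs)
    _ ≤ C * M := mul_le_mul_of_nonneg_left (hM t (Ioo_subset_Icc_self ht)) hC0

end Kernels

/-- existence and uniqueness of a continuous solution of the boundary value
problem `(D_0^{k'} u)(t) = f(t,u(t))`, `(I_0^{k'} u)(0) = 0`, stated in its equivalent fixed
point form `u(t) = ∫_0^t k(t,s) f(s,u(s)) ω(s) ds` on `[0,1]`, under (A1): `I_0^k` maps
`C([0,1])` into `C([0,1])`, and (A2): `f` continuous, Lipschitz in its second variable with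
constant `c_f` satisfying `c_f ‖I_0^k 1‖_∞ < 1`. -/
theorem stmt19 (ω : ℝ → ℝ) (hω : IsWeight 0 1 ω) (k k' : ℝ → ℝ → ℝ)
    (hk : MemK 0 1 ω k) (hk' : MemK 0 1 ω k') (hconj : Conjugate 0 1 ω k k')
    (hA1 : ∀ y : ℝ → ℝ, ContinuousOn y (Icc 0 1) →
      ContinuousOn (fun x => ∫ s in (0:ℝ)..x, k x s * y s * ω s) (Icc 0 1))
    (f : ℝ → ℝ → ℝ) (hfc : Continuous (Function.uncurry f))
    (c_f : ℝ) (hc : 0 < c_f)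
    (hlip : ∀ t x₁ x₂ : ℝ, t ∈ Icc (0:ℝ) 1 → |f t x₁ - f t x₂| ≤ c_f * |x₁ - x₂|)
    (M : ℝ) (hM : ∀ t ∈ Icc (0:ℝ) 1, (∫ s in (0:ℝ)..t, k t s * ω s) ≤ M)
    (hsmall : c_f * M < 1) :
    (∃ u : ℝ → ℝ, ContinuousOn u (Icc 0 1) ∧
      ∀ t ∈ Icc (0:ℝ) 1, u t = ∫ s in (0:ℝ)..t, k t s * f s (u s) * ω s) ∧
    (∀ u v : ℝ → ℝ,
      ContinuousOn u (Icc 0 1) →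
      (∀ t ∈ Icc (0:ℝ) 1, u t = ∫ s in (0:ℝ)..t, k t s * f s (u s) * ω s) →
      ContinuousOn v (Icc 0 1) →
      (∀ t ∈ Icc (0:ℝ) 1, v t = ∫ s in (0:ℝ)..t, k t s * f s (v s) * ω s) →
      EqOn u v (Icc 0 1)) := by
  have hM0 : 0 ≤ M := by simpa using hM 0 (left_mem_Icc.2 zero_le_one)
  have hfu : ∀ u : ℝ → ℝ, ContinuousOn u (Icc 0 1) →
      ContinuousOn (fun s => f s (u s)) (Icc 0 1) :=
    fun u hu => hfc.comp_continuousOn (continuousOn_id.prodMk hu)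
  refine exists_unique_continuousOn_fixedPoint isCompact_Icc
    (fun u => Ia 0 ω k fun s => f s (u s)) (q := ⟨c_f * M, by positivity⟩)
    (NNReal.coe_lt_coe.1 hsmall) (fun u hu => hA1 _ (hfu u hu)) fun u v hu hv C hC t ht => ?_
  have hfC : ∀ s ∈ Icc (0:ℝ) 1, |f s (u s) - f s (v s)| ≤ c_f * C := fun s hs =>
    (hlip s _ _ hs).trans (mul_le_mul_of_nonneg_left (hC s hs) hc.le)
  calc _ ≤ c_f * C * M :=
        abs_Ia_sub_le zero_lt_one hω hk hk' hconj hA1 hM (hfu u hu) (hfu v hv) hfC t ht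
    _ = c_f * M * C := mul_right_comm _ _ _
end
end
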